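/- Let S₁,…,Sₙ be a homogeneous Markov chain and d₁ ≥ d₂. Suppose M₂ is independent of (M₁, Sⁿ). Then for i with i-d₁ ≥ 1, (M₂, S^{i-d₂}) — (S_{i-d₂}, S^{i-d₁}) — (M₁, S_i) is a Markov chain; consequently, if X₁,ᵢ = f₁(M₁, S^{i-d₁}) and X₂,ᵢ = f₂(M₂, S^{i-d₂}) are deterministic functions, then P(x₂,ᵢ | x₁,ᵢ, s_i, s_{i-d₁}, s_{i-d₂}, s^{i-d₁-1}) = P(x₂,ᵢ | s_{i-d₁}, s_{i-d₂}, s^{i-d₁-1}). -/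

import Mathlib

/-!
Write `k = i - d₂` and `l = i - d₁ ≤ k`, and condition on
`G = {S_l = b, S_k = a, S^{l-1} = hist}`, an event of the path up to time `k` inside `{S_k = a}`.
On `G` the input `X₁` is a function of `M₁` alone, while `X₂` is a function of `(M₂, S^k)`.
Splitting over the value of `M₂`, independence of `M₁`, `M₂` and the path factors every
probability into a message part and a path part, and the claim reduces to the Markov property
in the form: given `S_k`, the future state `S_i` is independent of any event of the path up to
time `k`. That form follows from the one-step Markov property by induction on `i`.
-/

open scoped BigOperators

open Classical in
noncomputable def prob {Ω : Type*} [Fintype Ω] (p : Ω → ℝ) (E : Ω → Prop) : ℝ :=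
  ∑ ω, if E ω then p ω else 0

open Finset

section Prob

variable {Ω : Type*} [Fintype Ω] {p : Ω → ℝ}

theorem prob_congr {E F : Ω → Prop} (h : ∀ ω, E ω ↔ F ω) : prob p E = prob p F := by
  rw [show E = F from funext fun ω => propext (h ω)]

theorem prob_true (hp1 : ∑ ω, p ω = 1) : prob p (fun _ => True) = 1 := by
  simpa [prob] using hp1

theorem prob_eq_zero_of_forall_not {E : Ω → Prop} (h : ∀ ω, ¬ E ω) : prob p E = 0 := by
  simp [prob, h]

theorem prob_nonneg (hp0 : ∀ ω, 0 ≤ p ω) (E : Ω → Prop) : 0 ≤ prob p E :=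
  sum_nonneg fun ω _ => by split_ifs <;> simp [hp0 ω]

theorem prob_mono (hp0 : ∀ ω, 0 ≤ p ω) {E F : Ω → Prop} (h : ∀ ω, E ω → F ω) :
    prob p E ≤ prob p F :=
  sum_le_sum fun ω _ => by
    by_cases hE : E ω
    · simp [hE, h ω hE]
    · split_ifs <;> simp [hp0 ω]

theorem prob_eq_zero_of_imp (hp0 : ∀ ω, 0 ≤ p ω) {E F : Ω → Prop} (h : ∀ ω, E ω → F ω)
    (hF : prob p F = 0) : prob p E = 0 :=
  le_antisymm (hF ▸ prob_mono hp0 h) (prob_nonneg hp0 E)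

theorem prob_eq_sum_and_eq {β : Type*} (X : Ω → β) (F : Finset β) (hF : ∀ ω, X ω ∈ F)
    (E : Ω → Prop) : prob p E = ∑ v ∈ F, prob p (fun ω => X ω = v ∧ E ω) := by
  classical
  simp only [prob]
  rw [sum_comm]
  refine sum_congr rfl fun ω _ => ?_
  by_cases hE : E ω <;> simp [hE, hF ω]

theorem prob_comp_eq_sum {α : Type*} (X : Ω → α) (F : Finset α) (hF : ∀ ω, X ω ∈ F)
    (U : α → Prop) [DecidablePred U] :
    prob p (fun ω => U (X ω)) = ∑ x ∈ F with U x, prob p (fun ω => X ω = x) := by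
  rw [prob_eq_sum_and_eq X F hF, sum_filter]
  refine sum_congr rfl fun x _ => ?_
  split_ifs with hU
  · exact prob_congr fun ω => ⟨And.left, fun h => ⟨h, h ▸ hU⟩⟩
  · exact prob_eq_zero_of_forall_not fun ω h => hU (h.1 ▸ h.2)

theorem prob_and_and_eq_mul {α β γ : Type*} {X : Ω → α} {Y : Ω → β} {Z : Ω → γ}
    (h : ∀ x y z, prob p (fun ω => X ω = x ∧ Y ω = y ∧ Z ω = z) =
      prob p (fun ω => X ω = x) * prob p (fun ω => Y ω = y) * prob p (fun ω => Z ω = z))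
    (U : α → Prop) (V : β → Prop) (W : γ → Prop) :
    prob p (fun ω => U (X ω) ∧ V (Y ω) ∧ W (Z ω)) =
      prob p (fun ω => U (X ω)) * prob p (fun ω => V (Y ω)) * prob p (fun ω => W (Z ω)) := by
  classical
  rw [prob_comp_eq_sum (fun ω => (X ω, Y ω, Z ω))
      (univ.image X ×ˢ univ.image Y ×ˢ univ.image Z) (fun ω => by simp)
      (fun q => U q.1 ∧ V q.2.1 ∧ W q.2.2),
    filter_product U (fun q : β × γ => V q.1 ∧ W q.2), filter_product,
    prob_comp_eq_sum X (univ.image X) (by simp), prob_comp_eq_sum Y (univ.image Y) (by simp),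
    prob_comp_eq_sum Z (univ.image Z) (by simp),
    mul_assoc, sum_mul_sum, sum_mul_sum, sum_product]
  refine sum_congr rfl fun x _ => ?_
  rw [sum_product]
  refine sum_congr rfl fun y _ => ?_
  rw [mul_sum]
  refine sum_congr rfl fun z _ => ?_
  rw [← mul_assoc, ← h]
  exact prob_congr fun ω => by simp only [Prod.mk.injEq]

end Prob

section Path

variable {Ω 𝒮 : Type*} (S : ℕ → Ω → 𝒮)

def DependsOnPrefix (m : ℕ) (E : Ω → Prop) : Prop :=
  ∀ ω ω', (∀ j < m, S j ω = S j ω') → E ω → E ω'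

variable {S}

theorem prefix_eq_iff {m : ℕ} {ω ω' : Ω} :
    (fun j : Fin m => S j ω) = (fun j : Fin m => S j ω') ↔ ∀ j < m, S j ω = S j ω' := by
  simp [funext_iff, Fin.forall_iff]

theorem DependsOnPrefix.and {m : ℕ} {E F : Ω → Prop} (hE : DependsOnPrefix S m E)
    (hF : DependsOnPrefix S m F) : DependsOnPrefix S m (fun ω => E ω ∧ F ω) :=
  fun ω ω' h hEF => ⟨hE ω ω' h hEF.1, hF ω ω' h hEF.2⟩

theorem DependsOnPrefix.mono {m m' : ℕ} {E : Ω → Prop} (hE : DependsOnPrefix S m E)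
    (hm : m ≤ m') : DependsOnPrefix S m' E :=
  fun ω ω' h => hE ω ω' fun j hj => h j (hj.trans_le hm)

theorem dependsOnPrefix_eq {m j : ℕ} (hj : j < m) (c : 𝒮) :
    DependsOnPrefix S m (fun ω => S j ω = c) :=
  fun _ _ h hc => (h j hj).symm.trans hc

theorem dependsOnPrefix_forall_lt (m : ℕ) (hist : ℕ → 𝒮) :
    DependsOnPrefix S m (fun ω => ∀ j < m, S j ω = hist j) :=
  fun _ _ h hh j hj => (h j hj).symm.trans (hh j hj)

theorem dependsOnPrefix_prefix (m : ℕ) (P : (Fin m → 𝒮) → Prop) :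
    DependsOnPrefix S m (fun ω => P (fun j => S j ω)) :=
  fun _ _ h hP => by simpa only [prefix_eq_iff.2 h] using hP

end Path

section Markov

variable {Ω 𝒮 : Type*} [Fintype Ω] {p : Ω → ℝ} {S : ℕ → Ω → 𝒮} {n : ℕ}

def IsMarkovChain (p : Ω → ℝ) (S : ℕ → Ω → 𝒮) (n : ℕ) : Prop :=
  ∀ i, i + 1 < n → ∀ (t : 𝒮) (hist : ℕ → 𝒮),
    prob p (fun ω => S (i + 1) ω = t ∧ ∀ j ≤ i, S j ω = hist j) *
        prob p (fun ω => S i ω = hist i) =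
      prob p (fun ω => S (i + 1) ω = t ∧ S i ω = hist i) *
        prob p (fun ω => ∀ j ≤ i, S j ω = hist j)

theorem IsMarkovChain.step (hM : IsMarkovChain p S n) {i : ℕ} (hi : i + 1 < n) {E : Ω → Prop}
    (hE : DependsOnPrefix S (i + 1) E) (u t : 𝒮) :
    prob p (fun ω => S i ω = u ∧ S (i + 1) ω = t ∧ E ω) * prob p (fun ω => S i ω = u) =
      prob p (fun ω => S i ω = u ∧ S (i + 1) ω = t) * prob p (fun ω => S i ω = u ∧ E ω) := by
  classical
  let X : Ω → Fin (i + 1) → 𝒮 := fun ω j => S j ω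
  rw [prob_eq_sum_and_eq X (univ.image X) (by simp) (fun ω => S i ω = u ∧ S (i + 1) ω = t ∧ E ω),
    prob_eq_sum_and_eq X (univ.image X) (by simp) (fun ω => S i ω = u ∧ E ω), sum_mul, mul_sum]
  refine sum_congr rfl fun v hv => ?_
  obtain ⟨ω₀, -, rfl⟩ := mem_image.1 hv
  have hX : ∀ ω, X ω = X ω₀ ↔ ∀ j ≤ i, S j ω = S j ω₀ := fun ω => by
    simp only [X, prefix_eq_iff, Nat.lt_succ_iff]
  by_cases h₀ : S i ω₀ = u ∧ E ω₀
  · obtain ⟨rfl, hE₀⟩ := h₀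
    have hfib : ∀ ω, X ω = X ω₀ → S i ω = S i ω₀ ∧ E ω := fun ω h =>
      ⟨(hX ω).1 h i le_rfl,
        hE ω₀ ω (fun j hj => ((hX ω).1 h j (Nat.lt_succ_iff.1 hj)).symm) hE₀⟩
    have e₁ : prob p (fun ω => X ω = X ω₀ ∧ S i ω = S i ω₀ ∧ S (i + 1) ω = t ∧ E ω) =
        prob p (fun ω => S (i + 1) ω = t ∧ ∀ j ≤ i, S j ω = S j ω₀) :=
      prob_congr fun ω => ⟨fun h => ⟨h.2.2.1, (hX ω).1 h.1⟩,
        fun h => ⟨(hX ω).2 h.2, (hfib ω ((hX ω).2 h.2)).1, h.1, (hfib ω ((hX ω).2 h.2)).2⟩⟩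
    have e₂ : prob p (fun ω => X ω = X ω₀ ∧ S i ω = S i ω₀ ∧ E ω) =
        prob p (fun ω => ∀ j ≤ i, S j ω = S j ω₀) :=
      prob_congr fun ω => ⟨fun h => (hX ω).1 h.1, fun h => ⟨(hX ω).2 h, hfib ω ((hX ω).2 h)⟩⟩
    rw [e₁, e₂, prob_congr (E := fun ω => S i ω = S i ω₀ ∧ _) fun ω => and_comm]
    exact hM i hi t fun j => S j ω₀
  · have hempty : ∀ ω, ¬ (X ω = X ω₀ ∧ S i ω = u ∧ E ω) := fun ω ⟨h, hu, hEω⟩ =>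
      h₀ ⟨((hX ω).1 h i le_rfl).symm.trans hu,
        hE ω ω₀ (fun j hj => (hX ω).1 h j (Nat.lt_succ_iff.1 hj)) hEω⟩
    rw [prob_eq_zero_of_forall_not fun ω h => hempty ω ⟨h.1, h.2.1, h.2.2.2⟩,
      prob_eq_zero_of_forall_not fun ω h => hempty ω h, zero_mul, mul_zero]

theorem IsMarkovChain.forget_past (hM : IsMarkovChain p S n) (hp0 : ∀ ω, 0 ≤ p ω) {k i : ℕ}
    (hki : k ≤ i) (hin : i < n) {E : Ω → Prop} (hE : DependsOnPrefix S (k + 1) E) {a : 𝒮}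
    (hEa : ∀ ω, E ω → S k ω = a) (t : 𝒮) :
    prob p (fun ω => S i ω = t ∧ E ω) * prob p (fun ω => S k ω = a) =
      prob p (fun ω => S i ω = t ∧ S k ω = a) * prob p E := by
  classical
  induction i, hki using Nat.le_induction generalizing t with
  | base =>
    by_cases hta : t = a
    · subst hta
      rw [prob_congr fun ω => ⟨And.right, fun h => ⟨hEa ω h, h⟩⟩, prob_congr fun ω => and_self_iff,
        mul_comm]
    · rw [prob_eq_zero_of_forall_not fun ω h => hta (h.1.symm.trans (hEa ω h.2)),
        prob_eq_zero_of_forall_not (E := fun ω => S k ω = t ∧ S k ω = a)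
          fun ω h => hta (h.1.symm.trans h.2),
        zero_mul, zero_mul]
  | succ i hki ih =>
    rw [prob_eq_sum_and_eq (S i) (univ.image (S i)) (by simp) (fun ω => S (i + 1) ω = t ∧ E ω),
      prob_eq_sum_and_eq (S i) (univ.image (S i)) (by simp) (fun ω => S (i + 1) ω = t ∧ S k ω = a),
      sum_mul, sum_mul]
    refine sum_congr rfl fun u _ => ?_
    have hstepE := hM.step hin (hE.mono (by omega)) u t
    have hstepA := hM.step hin (dependsOnPrefix_eq (S := S) (j := k) (by omega) a) u t
    have hih := ih (by omega) u
    by_cases hu : prob p (fun ω => S i ω = u) = 0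
    · rw [prob_eq_zero_of_imp hp0 (fun ω h => h.1) hu,
        prob_eq_zero_of_imp hp0 (E := fun ω => S i ω = u ∧ S (i + 1) ω = t ∧ S k ω = a)
          (fun ω h => h.1) hu, zero_mul, zero_mul]
    · -- times `P(S_i = u)`, both sides equal `P(S_i = u, S_{i+1} = t) P(S_i = u, S_k = a) P(E)`
      refine mul_right_cancel₀ hu ?_
      linear_combination prob p (fun ω => S k ω = a) * hstepE +
        prob p (fun ω => S i ω = u ∧ S (i + 1) ω = t) * hih - prob p E * hstepA

theorem IsMarkovChain.condIndep (hM : IsMarkovChain p S n) (hp0 : ∀ ω, 0 ≤ p ω) {k i : ℕ}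
    (hki : k ≤ i) (hin : i < n) {E F : Ω → Prop} (hE : DependsOnPrefix S (k + 1) E)
    (hF : DependsOnPrefix S (k + 1) F) {a : 𝒮} (hEa : ∀ ω, E ω → S k ω = a)
    (hFa : ∀ ω, F ω → S k ω = a) (t : 𝒮) :
    prob p (fun ω => S i ω = t ∧ E ω) * prob p F =
      prob p E * prob p (fun ω => S i ω = t ∧ F ω) := by
  have hE' := hM.forget_past hp0 hki hin hE hEa t
  have hF' := hM.forget_past hp0 hki hin hF hFa t
  by_cases ha : prob p (fun ω => S k ω = a) = 0
  · rw [prob_eq_zero_of_imp hp0 hFa ha,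
      prob_eq_zero_of_imp hp0 (E := fun ω => S i ω = t ∧ F ω) (fun ω h => hFa ω h.2) ha,
      mul_zero, mul_zero]
  · refine mul_right_cancel₀ ha ?_
    linear_combination prob p F * hE' - prob p E * hF'

end Markov

section Channel

variable {Ω 𝒮 A B : Type*} [Fintype Ω] {p : Ω → ℝ} {S : ℕ → Ω → 𝒮} {n : ℕ}
  {M1 : Ω → A} {M2 : Ω → B}

theorem prob_and_and_eq_mul_of_indep
    (hind : ∀ (m1 : A) (m2 : B) (s : ℕ → 𝒮),
      prob p (fun ω => M1 ω = m1 ∧ M2 ω = m2 ∧ ∀ j < n, S j ω = s j) =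
        prob p (fun ω => M1 ω = m1) * prob p (fun ω => M2 ω = m2) *
          prob p (fun ω => ∀ j < n, S j ω = s j))
    (U : A → Prop) (V : B → Prop) {E : Ω → Prop} (hE : DependsOnPrefix S n E) :
    prob p (fun ω => U (M1 ω) ∧ V (M2 ω) ∧ E ω) =
      prob p (fun ω => U (M1 ω)) * prob p (fun ω => V (M2 ω)) * prob p E := by
  let T : Ω → Fin n → 𝒮 := fun ω j => S j ω
  have hfac : ∀ m1 m2 z, prob p (fun ω => M1 ω = m1 ∧ M2 ω = m2 ∧ T ω = z) =
      prob p (fun ω => M1 ω = m1) * prob p (fun ω => M2 ω = m2) * prob p (fun ω => T ω = z) := by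
    intro m1 m2 z
    rcases em (∃ ω₀, T ω₀ = z) with ⟨ω₀, rfl⟩ | hz
    · simp only [T, prefix_eq_iff]
      exact hind m1 m2 fun j => S j ω₀
    · rw [prob_eq_zero_of_forall_not fun ω h => not_exists.1 hz ω h.2.2,
        prob_eq_zero_of_forall_not fun ω h => not_exists.1 hz ω h, mul_zero]
  have hET : ∀ ω, E ω ↔ ∃ ω', T ω' = T ω ∧ E ω' := fun ω =>
    ⟨fun h => ⟨ω, rfl, h⟩, fun ⟨ω', h, h'⟩ => hE ω' ω (prefix_eq_iff.1 h) h'⟩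
  rw [prob_congr fun ω => and_congr_right' (and_congr_right' (hET ω)), prob_congr hET]
  exact prob_and_and_eq_mul hfac U V fun z => ∃ ω', T ω' = z ∧ E ω'

theorem IsMarkovChain.condIndep_messages (hM : IsMarkovChain p S n) (hp0 : ∀ ω, 0 ≤ p ω)
    (hp1 : ∑ ω, p ω = 1)
    (hind : ∀ (m1 : A) (m2 : B) (s : ℕ → 𝒮),
      prob p (fun ω => M1 ω = m1 ∧ M2 ω = m2 ∧ ∀ j < n, S j ω = s j) =
        prob p (fun ω => M1 ω = m1) * prob p (fun ω => M2 ω = m2) *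
          prob p (fun ω => ∀ j < n, S j ω = s j))
    {k i : ℕ} (hki : k ≤ i) (hin : i < n) (U : A → Prop) (V : B → Prop) {F G : Ω → Prop}
    (hF : DependsOnPrefix S (k + 1) F) (hG : DependsOnPrefix S (k + 1) G) {a : 𝒮}
    (hFa : ∀ ω, F ω → S k ω = a) (hGa : ∀ ω, G ω → S k ω = a) (t : 𝒮) :
    prob p (fun ω => V (M2 ω) ∧ U (M1 ω) ∧ S i ω = t ∧ F ω) * prob p G =
      prob p (fun ω => V (M2 ω) ∧ F ω) * prob p (fun ω => U (M1 ω) ∧ S i ω = t ∧ G ω) := by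
  have hn : k + 1 ≤ n := by omega
  have hSi : DependsOnPrefix S n (fun ω => S i ω = t) := dependsOnPrefix_eq hin t
  have hA : prob p (fun ω => V (M2 ω) ∧ U (M1 ω) ∧ S i ω = t ∧ F ω) =
      prob p (fun ω => U (M1 ω)) * prob p (fun ω => V (M2 ω)) *
        prob p (fun ω => S i ω = t ∧ F ω) := by
    rw [← prob_and_and_eq_mul_of_indep hind U V (hSi.and (hF.mono hn))]
    exact prob_congr fun ω => and_left_comm
  have hB : prob p (fun ω => V (M2 ω) ∧ F ω) = prob p (fun ω => V (M2 ω)) * prob p F := by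
    simpa [prob_true hp1] using
      prob_and_and_eq_mul_of_indep hind (fun _ => True) V (hF.mono hn)
  have hD : prob p (fun ω => U (M1 ω) ∧ S i ω = t ∧ G ω) =
      prob p (fun ω => U (M1 ω)) * prob p (fun ω => S i ω = t ∧ G ω) := by
    simpa [prob_true hp1] using
      prob_and_and_eq_mul_of_indep hind U (fun _ => True) (hSi.and (hG.mono hn))
  rw [hA, hB, hD]
  linear_combination prob p (fun ω => U (M1 ω)) * prob p (fun ω => V (M2 ω)) *
    hM.condIndep hp0 hki hin hF hG hFa hGa t

theorem IsMarkovChain.condIndep_inputs (hM : IsMarkovChain p S n) (hp0 : ∀ ω, 0 ≤ p ω)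
    (hp1 : ∑ ω, p ω = 1)
    (hind : ∀ (m1 : A) (m2 : B) (s : ℕ → 𝒮),
      prob p (fun ω => M1 ω = m1 ∧ M2 ω = m2 ∧ ∀ j < n, S j ω = s j) =
        prob p (fun ω => M1 ω = m1) * prob p (fun ω => M2 ω = m2) *
          prob p (fun ω => ∀ j < n, S j ω = s j))
    {k i : ℕ} (hki : k ≤ i) (hin : i < n) (Q : B → (Fin (k + 1) → 𝒮) → Prop) (U : A → Prop)
    {E G : Ω → Prop} (hG : DependsOnPrefix S (k + 1) G) {a : 𝒮}
    (hGa : ∀ ω, G ω → S k ω = a) (hEU : ∀ ω, G ω → (E ω ↔ U (M1 ω))) (t : 𝒮) :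
    prob p (fun ω => Q (M2 ω) (fun j => S j ω) ∧ E ω ∧ S i ω = t ∧ G ω) * prob p G =
      prob p (fun ω => Q (M2 ω) (fun j => S j ω) ∧ G ω) *
        prob p (fun ω => E ω ∧ S i ω = t ∧ G ω) := by
  classical
  have hE : ∀ ω, (E ω ∧ S i ω = t ∧ G ω) ↔ (U (M1 ω) ∧ S i ω = t ∧ G ω) := fun ω =>
    ⟨fun ⟨h, ht, hg⟩ => ⟨(hEU ω hg).1 h, ht, hg⟩, fun ⟨h, ht, hg⟩ => ⟨(hEU ω hg).2 h, ht, hg⟩⟩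
  rw [prob_congr fun ω => and_congr_right' (hE ω), prob_congr hE,
    prob_eq_sum_and_eq M2 (univ.image M2) (by simp)
      (fun ω => Q (M2 ω) (fun j => S j ω) ∧ U (M1 ω) ∧ S i ω = t ∧ G ω),
    prob_eq_sum_and_eq M2 (univ.image M2) (by simp) (fun ω => Q (M2 ω) (fun j => S j ω) ∧ G ω),
    sum_mul, sum_mul]
  refine sum_congr rfl fun m2 _ => ?_
  have hQ : DependsOnPrefix S (k + 1) (fun ω => Q m2 (fun j => S j ω) ∧ G ω) :=
    (dependsOnPrefix_prefix _ _).and hG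
  have hA : prob p (fun ω => M2 ω = m2 ∧ Q (M2 ω) (fun j => S j ω) ∧ U (M1 ω) ∧ S i ω = t ∧ G ω) =
      prob p (fun ω => M2 ω = m2 ∧ U (M1 ω) ∧ S i ω = t ∧ Q m2 (fun j => S j ω) ∧ G ω) :=
    prob_congr fun ω => by constructor <;> rintro ⟨rfl, h⟩ <;> tauto
  have hB : prob p (fun ω => M2 ω = m2 ∧ Q (M2 ω) (fun j => S j ω) ∧ G ω) =
      prob p (fun ω => M2 ω = m2 ∧ Q m2 (fun j => S j ω) ∧ G ω) :=
    prob_congr fun ω => by constructor <;> rintro ⟨rfl, h⟩ <;> exact ⟨rfl, h⟩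
  rw [hA, hB]
  exact hM.condIndep_messages hp0 hp1 hind hki hin U (· = m2) hQ hG (fun ω h => hGa ω h.2) hGa t

end Channel

theorem inputs_cond_indep_general {Ω 𝒮 A B 𝒳₁ 𝒳₂ : Type*} [Fintype Ω]
    (p : Ω → ℝ) (hp0 : ∀ ω, 0 ≤ p ω) (hp1 : ∑ ω, p ω = 1)
    (n : ℕ) (S : ℕ → Ω → 𝒮) (M1 : Ω → A) (M2 : Ω → B)
    (hind : ∀ (m1 : A) (m2 : B) (s : ℕ → 𝒮),
      prob p (fun ω => M1 ω = m1 ∧ M2 ω = m2 ∧ ∀ j < n, S j ω = s j) =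
        prob p (fun ω => M1 ω = m1) * prob p (fun ω => M2 ω = m2) *
          prob p (fun ω => ∀ j < n, S j ω = s j))
    (hMarkov : ∀ (m1 : A) (m2 : B), ∀ i, i + 1 < n → ∀ (t : 𝒮) (hist : ℕ → 𝒮),
      prob p (fun ω => S (i + 1) ω = t ∧ ∀ j ≤ i, S j ω = hist j) *
          prob p (fun ω => S i ω = hist i) =
        prob p (fun ω => S (i + 1) ω = t ∧ S i ω = hist i) *
          prob p (fun ω => ∀ j ≤ i, S j ω = hist j))
    (d1 d2 i : ℕ) (hd : d2 ≤ d1) (hin : i < n)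
    (f1 : A → (Fin (i - d1 + 1) → 𝒮) → 𝒳₁)
    (f2 : B → (Fin (i - d2 + 1) → 𝒮) → 𝒳₂) :
    ∀ (x1 : 𝒳₁) (x2 : 𝒳₂) (t a b : 𝒮) (hist : ℕ → 𝒮),
      prob p (fun ω => f2 (M2 ω) (fun j => S j.1 ω) = x2 ∧
            f1 (M1 ω) (fun j => S j.1 ω) = x1 ∧ S i ω = t ∧
            S (i - d1) ω = b ∧ S (i - d2) ω = a ∧
            ∀ j < i - d1, S j ω = hist j) *
          prob p (fun ω => S (i - d1) ω = b ∧ S (i - d2) ω = a ∧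
            ∀ j < i - d1, S j ω = hist j) =
        prob p (fun ω => f2 (M2 ω) (fun j => S j.1 ω) = x2 ∧
            S (i - d1) ω = b ∧ S (i - d2) ω = a ∧
            ∀ j < i - d1, S j ω = hist j) *
          prob p (fun ω => f1 (M1 ω) (fun j => S j.1 ω) = x1 ∧ S i ω = t ∧
            S (i - d1) ω = b ∧ S (i - d2) ω = a ∧
            ∀ j < i - d1, S j ω = hist j) := by
  intro x1 x2 t a b hist
  obtain ⟨ω₀⟩ : Nonempty Ω := by
    by_contra h
    simp [not_nonempty_iff.1 h] at hp1
  have hG : DependsOnPrefix S (i - d2 + 1)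
      (fun ω => S (i - d1) ω = b ∧ S (i - d2) ω = a ∧ ∀ j < i - d1, S j ω = hist j) :=
    (dependsOnPrefix_eq (by omega) b).and ((dependsOnPrefix_eq (by omega) a).and
      ((dependsOnPrefix_forall_lt _ hist).mono (by omega)))
  have hM : IsMarkovChain p S n := hMarkov (M1 ω₀) (M2 ω₀)
  refine hM.condIndep_inputs hp0 hp1 hind (Nat.sub_le i d2) hin
    (fun m2 w => f2 m2 w = x2) (fun m1 => f1 m1 (fun j => if j.1 < i - d1 then hist j else b) = x1)
    hG (fun _ h => h.2.1) (fun ω ⟨hb, _, hh⟩ => ?_) t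
  have hpre : (fun j : Fin (i - d1 + 1) => S j ω) =
      fun j : Fin (i - d1 + 1) => if j.1 < i - d1 then hist j else b := by
    funext j
    split_ifs with hj
    · exact hh j hj
    · rwa [show j.1 = i - d1 by omega]
  rw [hpre]

/-- Let `S₀, …, S_{n-1}` be a Markov chain, `M₁, M₂` messages with
`P(m₁, m₂, sⁿ) = P(m₁) P(m₂) P(sⁿ)`, and delays `d₁ ≥ d₂ ≥ 0`.  For `i` with
`i - d₁ ≥ 1`, `(M₂, S^{i-d₂}) — (S_{i-d₂}, S^{i-d₁}) — (M₁, S_i)` is a Markov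
chain; consequently, for deterministic channel inputs
`X₁ᵢ = f₁(M₁, S^{i-d₁})` and `X₂ᵢ = f₂(M₂, S^{i-d₂})`,
`P(x₂ᵢ | x₁ᵢ, s_i, s_{i-d₁}, s_{i-d₂}, s^{i-d₁-1}) =
 P(x₂ᵢ | s_{i-d₁}, s_{i-d₂}, s^{i-d₁-1})` (cross-multiplied form). -/
theorem inputs_cond_indep {Ω 𝒮 A B 𝒳₁ 𝒳₂ : Type*} [Fintype Ω]
    (p : Ω → ℝ) (hp0 : ∀ ω, 0 ≤ p ω) (hp1 : ∑ ω, p ω = 1)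
    (n : ℕ) (S : ℕ → Ω → 𝒮) (M1 : Ω → A) (M2 : Ω → B)
    (hind : ∀ (m1 : A) (m2 : B) (s : ℕ → 𝒮),
      prob p (fun ω => M1 ω = m1 ∧ M2 ω = m2 ∧ ∀ j < n, S j ω = s j) =
        prob p (fun ω => M1 ω = m1) * prob p (fun ω => M2 ω = m2) *
          prob p (fun ω => ∀ j < n, S j ω = s j))
    (hMarkov : ∀ (m1 : A) (m2 : B), ∀ i, i + 1 < n → ∀ (t : 𝒮) (hist : ℕ → 𝒮),
      prob p (fun ω => S (i + 1) ω = t ∧ ∀ j ≤ i, S j ω = hist j) *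
          prob p (fun ω => S i ω = hist i) =
        prob p (fun ω => S (i + 1) ω = t ∧ S i ω = hist i) *
          prob p (fun ω => ∀ j ≤ i, S j ω = hist j))
    (d1 d2 i : ℕ) (hd : d2 ≤ d1) (hd1 : d1 < i) (hin : i < n)
    (f1 : A → (Fin (i - d1 + 1) → 𝒮) → 𝒳₁)
    (f2 : B → (Fin (i - d2 + 1) → 𝒮) → 𝒳₂) :
    ∀ (x1 : 𝒳₁) (x2 : 𝒳₂) (t a b : 𝒮) (hist : ℕ → 𝒮),
      prob p (fun ω => f2 (M2 ω) (fun j => S j.1 ω) = x2 ∧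
            f1 (M1 ω) (fun j => S j.1 ω) = x1 ∧ S i ω = t ∧
            S (i - d1) ω = b ∧ S (i - d2) ω = a ∧
            ∀ j < i - d1, S j ω = hist j) *
          prob p (fun ω => S (i - d1) ω = b ∧ S (i - d2) ω = a ∧
            ∀ j < i - d1, S j ω = hist j) =
        prob p (fun ω => f2 (M2 ω) (fun j => S j.1 ω) = x2 ∧
            S (i - d1) ω = b ∧ S (i - d2) ω = a ∧
            ∀ j < i - d1, S j ω = hist j) *
          prob p (fun ω => f1 (M1 ω) (fun j => S j.1 ω) = x1 ∧ S i ω = t ∧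
            S (i - d1) ω = b ∧ S (i - d2) ω = a ∧
            ∀ j < i - d1, S j ω = hist j) :=
  inputs_cond_indep_general p hp0 hp1 n S M1 M2 hind hMarkov d1 d2 i hd hin f1 f2
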